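/- arXiv:2509.24728 — 2 statements merged into one kernel-verified Lean document; each statement's English description precedes it below -/
import Mathlib

section
/- For a Bernoulli variable parameterized through the natural activation a(s) = ν(s) = (1 + sin(π(s−C)/A))/2 with |s − C| < A/2, the Fisher information with respect to the score s is constant: E[(d/ds log P(C))²] = π²/A². -/
open Real

/-!
With `θ = π (s - C) / A`, the activation `ν = (1 + sin θ) / 2` has derivative `(π / (2A)) cos θ`
and Bernoulli variance `ν (1 - ν) = cos² θ / 4`. The Fisher information of a Bernoulli variable
is `ν'² / (ν (1 - ν))`, so the factors `cos² θ` cancel; `|θ| < π / 2` keeps `cos θ` nonzero.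
-/

theorem bernoulli_fisher_info_eq_sq_div_variance {K : Type*} [Field K] {a : K} (ha : a ≠ 0)
    (ha' : 1 - a ≠ 0) (d : K) :
    a * (d / a) ^ 2 + (1 - a) * (d / (1 - a)) ^ 2 = d ^ 2 / (a * (1 - a)) := by
  field_simp
  ring

noncomputable def naturalActivation (C A s : ℝ) : ℝ :=
  (1 + sin (π * (s - C) / A)) / 2

namespace naturalActivation

theorem hasDerivAt (C A s : ℝ) :
    HasDerivAt (naturalActivation C A) (π / (2 * A) * cos (π * (s - C) / A)) s := by
  have hθ : HasDerivAt (fun y : ℝ => π * (y - C) / A) (π / A) s := by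
    simpa using (((hasDerivAt_id s).sub_const C).const_mul π).div_const A
  exact ((hθ.sin.const_add 1).div_const 2).congr_deriv (by ring)

theorem mul_one_sub (C A s : ℝ) :
    naturalActivation C A s * (1 - naturalActivation C A s) = cos (π * (s - C) / A) ^ 2 / 4 := by
  rw [naturalActivation, cos_sq']
  ring

end naturalActivation

theorem cos_pos_of_abs_sub_lt_half {C A s : ℝ} (hA : 0 < A) (hs : |s - C| < A / 2) :
    0 < cos (π * (s - C) / A) := by
  have hθ : |π * (s - C) / A| < π / 2 := by
    rw [abs_div, abs_mul, abs_of_pos pi_pos, abs_of_pos hA, div_lt_iff₀ hA]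
    nlinarith [pi_pos]
  exact cos_pos_of_mem_Ioo ⟨by linarith [neg_abs_le (π * (s - C) / A)],
    (le_abs_self _).trans_lt hθ⟩

/-- For a Bernoulli variable parameterized through the natural activation
`ν s = (1 + sin (π (s - C) / A)) / 2` with `|s - C| < A / 2`, the Fisher information
with respect to the score `s` is the constant `π^2 / A^2`. -/
theorem bernoulli_natural_fisher_info (C A : ℝ) (hA : 0 < A) (s : ℝ)
    (hs : |s - C| < A / 2) :
    ((1 + Real.sin (Real.pi * (s - C) / A)) / 2) *
        (deriv (fun y : ℝ => (1 + Real.sin (Real.pi * (y - C) / A)) / 2) s /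
          ((1 + Real.sin (Real.pi * (s - C) / A)) / 2)) ^ 2 +
      (1 - (1 + Real.sin (Real.pi * (s - C) / A)) / 2) *
        (deriv (fun y : ℝ => (1 + Real.sin (Real.pi * (y - C) / A)) / 2) s /
          (1 - (1 + Real.sin (Real.pi * (s - C) / A)) / 2)) ^ 2
      = Real.pi ^ 2 / A ^ 2 := by
  have hcos := cos_pos_of_abs_sub_lt_half hA hs
  have hvar := naturalActivation.mul_one_sub C A s
  obtain ⟨hν, hν'⟩ : naturalActivation C A s ≠ 0 ∧ 1 - naturalActivation C A s ≠ 0 :=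
    mul_ne_zero_iff.mp (by rw [hvar]; positivity)
  change naturalActivation C A s * (deriv (naturalActivation C A) s / naturalActivation C A s) ^ 2
      + (1 - naturalActivation C A s) *
        (deriv (naturalActivation C A) s / (1 - naturalActivation C A s)) ^ 2 = π ^ 2 / A ^ 2
  rw [(naturalActivation.hasDerivAt C A s).deriv,
    bernoulli_fisher_info_eq_sq_div_variance hν hν', hvar]
  field_simp
  ring
end

section
/- In the catnat FIM, off-diagonal entries between an ancestor w and descendant w' (w a strict prefix of w', |w'| = h'−1) vanish in expectation: ∑_{b ∈ {0,1}^H} p_b (∂ log p_b / ∂ a(w)) (∂ log p_b / ∂ a(w')) = 0, because the inner sum over descendants of w' splits as P(reach w')·a(w')·(1/a(w')) − P(reach w')·(1−a(w'))·(1/(1−a(w'))) = 0. -/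
/-!
The score `∂ log p_b / ∂ a(u)` of a leaf `b` is `1 / a(u)` or `-1 / (1 - a(u))` according to the
bit of `b` after `u`, and `0` unless `b` passes strictly below `u`. On the leaves below `w'`, the
bit after the ancestor `w` is the one fixed by `w'`, so the score of `w` is a constant there and
the sum is that constant times the mean of the score of `w'`. The mean of any score vanishes:
differentiate `∑_b p_b = 1` with respect to `a(w')`.
-/

open Finset

noncomputable def catnatP (a : List Bool → ℝ) : List Bool → ℝ
  | [] => 1
  | x :: rest => (if x then a [] else 1 - a []) * catnatP (fun w => a (x :: w)) rest

theorem catnatP_pos {a : List Bool → ℝ} {l : List Bool}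
    (hl : ∀ u, u <+: l → u ≠ l → a u ∈ Set.Ioo (0 : ℝ) 1) : 0 < catnatP a l := by
  induction l generalizing a with
  | nil => exact one_pos
  | cons x l ih =>
    have ha := hl [] List.nil_prefix (List.cons_ne_nil _ _).symm
    refine mul_pos ?_ (ih fun u hu hne => hl (x :: u) (List.cons_prefix_cons.2 ⟨rfl, hu⟩)
      (by simpa using hne))
    cases x <;> simp [ha.1, ha.2]

theorem sum_ofFn_succ {M : Type*} [AddCommMonoid M] (n : ℕ) (f : List Bool → M) :
    ∑ b : Fin (n + 1) → Bool, f (List.ofFn b) =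
      ∑ x : Bool, ∑ r : Fin n → Bool, f (x :: List.ofFn r) := by
  rw [← (Fin.consEquiv fun _ => Bool).sum_comp, Fintype.sum_prod_type]
  simp [Fin.consEquiv, List.ofFn_succ]

theorem sum_catnatP_ofFn (n : ℕ) (a : List Bool → ℝ) :
    ∑ b : Fin n → Bool, catnatP a (List.ofFn b) = 1 := by
  induction n generalizing a with
  | zero => simp [catnatP]
  | succ n ih =>
    rw [sum_ofFn_succ]
    simp [catnatP, ← mul_sum, ih]

/-- `catnatScore a w l` is `∂ log (catnatP a l) / ∂ a(w)`. -/
noncomputable def catnatScore (a : List Bool → ℝ) : List Bool → List Bool → ℝ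
  | [], x :: _ => if x then (a [])⁻¹ else -(1 - a [])⁻¹
  | y :: w, x :: l => if x = y then catnatScore (fun u => a (y :: u)) w l else 0
  | _, [] => 0

theorem catnatScore_nil_right (a : List Bool → ℝ) (w : List Bool) : catnatScore a w [] = 0 := by
  cases w <;> rfl

theorem catnatScore_mul_catnatScore_of_prefix (a : List Bool → ℝ) {w w' : List Bool}
    (hpre : w <+: w') (hne : w ≠ w') (l : List Bool) :
    catnatScore a w l * catnatScore a w' l = catnatScore a w w' * catnatScore a w' l := by
  induction w generalizing a w' l with
  | nil =>
    obtain ⟨y, s, rfl⟩ := List.exists_cons_of_ne_nil hne.symm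
    cases l with
    | nil => simp [catnatScore_nil_right]
    | cons x r => by_cases hxy : x = y <;> simp [catnatScore, hxy]
  | cons z v ih =>
    obtain ⟨t, rfl⟩ := hpre
    cases l with
    | nil => simp [catnatScore_nil_right]
    | cons x r =>
      by_cases hxz : x = z
      · subst hxz
        simpa [catnatScore] using ih _ ⟨t, rfl⟩ (by simpa using hne) r
      · simp [catnatScore, hxz]

theorem hasDerivAt_catnatP_update {a : List Bool → ℝ} {w : List Bool} (l : List Bool)
    (h0 : a w ≠ 0) (h1 : a w ≠ 1) :
    HasDerivAt (fun t => catnatP (Function.update a w t) l) (catnatP a l * catnatScore a w l)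
      (a w) := by
  induction w generalizing a l with
  | nil =>
    cases l with
    | nil => simpa [catnatP, catnatScore_nil_right] using hasDerivAt_const (a []) (1 : ℝ)
    | cons x r =>
      set C := catnatP (fun u => a (x :: u)) r
      have hf : (fun t => catnatP (Function.update a [] t) (x :: r))
          = fun t => (if x then t else 1 - t) * C := by
        funext t
        simp [catnatP, C, Function.update_of_ne]
      have hval : catnatP a (x :: r) * catnatScore a [] (x :: r) = if x then C else -C := by
        have : 1 - a [] ≠ 0 := sub_ne_zero.2 h1.symm
        cases x <;> simp [catnatP, catnatScore, C] <;> field_simp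
      rw [hf, hval]
      cases x
      · simpa using ((hasDerivAt_id (a [])).const_sub 1).mul_const C
      · simpa using (hasDerivAt_id (a [])).mul_const C
  | cons y w ih =>
    cases l with
    | nil => simpa [catnatP, catnatScore_nil_right] using hasDerivAt_const (a (y :: w)) (1 : ℝ)
    | cons x r =>
      by_cases hxy : x = y
      · subst hxy
        have hf : (fun t => catnatP (Function.update a (x :: w) t) (x :: r))
            = fun t => (if x then a [] else 1 - a []) *
                catnatP (Function.update (fun u => a (x :: u)) w t) r := by
          funext t
          simp only [catnatP, Function.update_of_ne (List.cons_ne_nil x w).symm,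
            Function.update_comp_eq_of_injective' a List.cons_injective w t]
        rw [hf]
        simpa [catnatP, catnatScore, mul_assoc] using
          (ih r h0 h1).const_mul (if x then a [] else 1 - a [])
      · have hf : (fun t => catnatP (Function.update a (y :: w) t) (x :: r))
            = fun _ => catnatP a (x :: r) := by
          funext t
          simp [catnatP, hxy]
        rw [hf]
        simpa [catnatScore, hxy] using hasDerivAt_const (a (y :: w)) (catnatP a (x :: r))

theorem deriv_log_catnatP_update {a : List Bool → ℝ} {w l : List Bool} (hl : 0 < catnatP a l)
    (h0 : a w ≠ 0) (h1 : a w ≠ 1) :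
    deriv (fun t => Real.log (catnatP (Function.update a w t) l)) (a w) = catnatScore a w l := by
  have hlog := (hasDerivAt_catnatP_update l h0 h1).log (by simpa using hl.ne')
  rw [Function.update_eq_self] at hlog
  rw [hlog.deriv, mul_div_cancel_left₀ _ hl.ne']

theorem sum_catnatP_mul_catnatScore (n : ℕ) {a : List Bool → ℝ} {w : List Bool}
    (h0 : a w ≠ 0) (h1 : a w ≠ 1) :
    ∑ b : Fin n → Bool, catnatP a (List.ofFn b) * catnatScore a w (List.ofFn b) = 0 := by
  have hsum := HasDerivAt.fun_sum fun (b : Fin n → Bool) (_ : b ∈ univ) =>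
    hasDerivAt_catnatP_update (List.ofFn b) h0 h1
  simp only [sum_catnatP_ofFn] at hsum
  exact ((hasDerivAt_const (a w) (1 : ℝ)).unique hsum).symm

theorem catnat_fim_offdiag_ancestor_general (H : ℕ) (a : List Bool → ℝ)
    (ha : ∀ u : List Bool, u.length < H → a u ∈ Set.Ioo (0:ℝ) 1)
    (w w' : List Bool) (hw' : w'.length < H)
    (hpre : w <+: w') (hne : w ≠ w') :
    ∑ b : Fin H → Bool,
      catnatP a (List.ofFn b) *
        deriv (fun t : ℝ =>
          Real.log (catnatP (Function.update a w t) (List.ofFn b))) (a w) *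
        deriv (fun t : ℝ =>
          Real.log (catnatP (Function.update a w' t) (List.ofFn b))) (a w') = 0 := by
  have haw := ha w (hpre.length_le.trans_lt hw')
  have haw' := ha w' hw'
  have hleaf (b : Fin H → Bool) : 0 < catnatP a (List.ofFn b) :=
    catnatP_pos fun u hu hne => ha u <| by
      simpa using hu.length_le.lt_of_ne fun h => hne (hu.eq_of_length h)
  calc _ = ∑ b : Fin H → Bool, catnatP a (List.ofFn b) * catnatScore a w (List.ofFn b) *
          catnatScore a w' (List.ofFn b) := by
        refine sum_congr rfl fun b _ => ?_
        rw [deriv_log_catnatP_update (hleaf b) haw.1.ne' haw.2.ne,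
          deriv_log_catnatP_update (hleaf b) haw'.1.ne' haw'.2.ne]
    _ = catnatScore a w w' *
          ∑ b : Fin H → Bool, catnatP a (List.ofFn b) * catnatScore a w' (List.ofFn b) := by
        rw [mul_sum]
        refine sum_congr rfl fun b _ => ?_
        rw [mul_assoc, catnatScore_mul_catnatScore_of_prefix a hpre hne]
        ring
    _ = 0 := by rw [sum_catnatP_mul_catnatScore H haw'.1.ne' haw'.2.ne, mul_zero]

/-- For an ancestor `w` and strict descendant `w'` (`w` a strict prefix of `w'`),
the off-diagonal FIM entry vanishes in expectation over the leaves. -/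
theorem catnat_fim_offdiag_ancestor (H : ℕ) (hH : 1 ≤ H) (a : List Bool → ℝ)
    (ha : ∀ u : List Bool, u.length < H → a u ∈ Set.Ioo (0:ℝ) 1)
    (w w' : List Bool) (hw : w.length < H) (hw' : w'.length < H)
    (hpre : w <+: w') (hne : w ≠ w') :
    ∑ b : Fin H → Bool,
      catnatP a (List.ofFn b) *
        deriv (fun t : ℝ =>
          Real.log (catnatP (Function.update a w t) (List.ofFn b))) (a w) *
        deriv (fun t : ℝ =>
          Real.log (catnatP (Function.update a w' t) (List.ofFn b))) (a w') = 0 :=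
  catnat_fim_offdiag_ancestor_general H a ha w w' hw' hpre hne
end
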